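/- Let V be a commutative ring, I an idempotent ideal with Ĩ flat, and let M^a denote the localization functor to the quotient of Mod_V by almost zero modules. Then the functor M ↦ Ĩ ⊗_V M takes values in firm modules and the counit Ĩ ⊗_V M → M is an almost isomorphism for every M; moreover Ĩ ⊗_V (Ĩ ⊗_V M) → Ĩ ⊗_V M is an isomorphism (the functor Ĩ ⊗_V (−) is idempotent up to natural isomorphism). -/
import Mathlib


open TensorProduct

set_option maxHeartbeats 1000000
set_option synthInstance.maxHeartbeats 400000

noncomputable section

variable {V : Type} [CommRing V]

/-- The multiplication map `Ĩ = I ⊗[V] I → V` induced by the inclusion. -/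
def idealMul (I : Ideal V) : (↥I ⊗[V] ↥I) →ₗ[V] V :=
  TensorProduct.lift (((LinearMap.mul V V).comp I.subtype).compl₂ I.subtype)

/-- The multiplication map `I ⊗[V] M → M`. -/
def smulMap (I : Ideal V) (M : Type) [AddCommGroup M] [Module V M] :
    (↥I ⊗[V] M) →ₗ[V] M :=
  TensorProduct.lift ((LinearMap.lsmul V M).comp I.subtype)

/-- The counit `Ĩ ⊗[V] M → M`. -/
def tildeSmulMap (I : Ideal V) (M : Type) [AddCommGroup M] [Module V M] :
    ((↥I ⊗[V] ↥I) ⊗[V] M) →ₗ[V] M :=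
  TensorProduct.lift ((LinearMap.lsmul V M).comp (idealMul I))

lemma idealMul_tmul (I : Ideal V) (a b : ↥I) : idealMul I (a ⊗ₜ[V] b) = (↑a : V) * ↑b := rfl

lemma smulMap_tmul (I : Ideal V) (M : Type) [AddCommGroup M] [Module V M] (a : ↥I) (m : M) :
    smulMap I M (a ⊗ₜ[V] m) = (↑a : V) • m := rfl

lemma tildeSmulMap_tmul (I : Ideal V) (M : Type) [AddCommGroup M] [Module V M]
    (w : ↥I ⊗[V] ↥I) (m : M) : tildeSmulMap I M (w ⊗ₜ[V] m) = idealMul I w • m := rfl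

lemma idealMul_mem (I : Ideal V) (w : ↥I ⊗[V] ↥I) : idealMul I w ∈ I := by
  induction w using TensorProduct.induction_on with
  | zero => simp
  | tmul a b => rw [idealMul_tmul]; exact I.mul_mem_right _ a.2
  | add x y hx hy => rw [map_add]; exact add_mem hx hy

def idealMulI (I : Ideal V) : (↥I ⊗[V] ↥I) →ₗ[V] ↥I :=
  (idealMul I).codRestrict (I : Submodule V V) (idealMul_mem I)

lemma coe_idealMulI (I : Ideal V) (w : ↥I ⊗[V] ↥I) : (↑(idealMulI I w) : V) = idealMul I w := rfl

lemma idealMulI_surjective (I : Ideal V) (hI : I * I = I) :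
    Function.Surjective (idealMulI I) := by
  intro a
  have ha : (↑a : V) ∈ I * I := by rw [hI]; exact a.2
  have : (↑a : V) ∈ LinearMap.range (idealMul I) := by
    refine Submodule.mul_induction_on ha (fun x hx y hy => ?_) (fun x y hx hy => add_mem hx hy)
    exact ⟨(⟨x, hx⟩ : ↥I) ⊗ₜ[V] (⟨y, hy⟩ : ↥I), rfl⟩
  obtain ⟨w, hw⟩ := this
  exact ⟨w, Subtype.ext (by rw [coe_idealMulI]; exact hw)⟩

lemma key (I : Ideal V) (M : Type) [AddCommGroup M] [Module V M]
    (w : ↥I ⊗[V] ↥I) (z : (↥I ⊗[V] ↥I) ⊗[V] M) :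
    idealMul I w • z = w ⊗ₜ[V] tildeSmulMap I M z := by
  induction w using TensorProduct.induction_on with
  | zero => simp
  | tmul ε δ =>
    induction z using TensorProduct.induction_on with
    | zero => simp
    | tmul x m =>
      induction x using TensorProduct.induction_on with
      | zero => simp
      | tmul a b =>
        rw [idealMul_tmul, tildeSmulMap_tmul, idealMul_tmul]
        have h1 : ((↑ε : V) * ↑δ) • a = ((↑a : V) * ↑δ) • ε := by
          apply Subtype.ext; simp [mul_comm, mul_left_comm]
        have h2 : ((↑a : V) * ↑δ) • b = ((↑a : V) * ↑b) • δ := by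
          apply Subtype.ext; simp [mul_comm, mul_left_comm]
        rw [smul_tmul', smul_tmul', h1, smul_tmul, h2, tmul_smul, smul_tmul]
      | add x y hx hy =>
        rw [add_tmul, smul_add, hx, hy, map_add, tmul_add]
    | add z1 z2 h1 h2 => rw [smul_add, h1, h2, map_add, tmul_add]
  | add w1 w2 h1 h2 => rw [map_add, add_smul, h1, h2, add_tmul]

lemma tildeSmulMap_eq_lTensor (I : Ideal V) (M : Type) [AddCommGroup M] [Module V M] :
    tildeSmulMap I ((↥I ⊗[V] ↥I) ⊗[V] M) = (tildeSmulMap I M).lTensor (↥I ⊗[V] ↥I) := by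
  apply LinearMap.ext; intro u
  induction u using TensorProduct.induction_on with
  | zero => simp
  | tmul w z => rw [tildeSmulMap_tmul, LinearMap.lTensor_tmul, key]
  | add x y hx hy => rw [map_add, map_add, hx, hy]

lemma ker_almost (I : Ideal V) (hI : I * I = I) (M : Type) [AddCommGroup M] [Module V M] :
    ∀ a ∈ I, ∀ z ∈ LinearMap.ker (tildeSmulMap I M), a • z = 0 := by
  intro a ha z hz
  obtain ⟨w, hw⟩ := idealMulI_surjective I hI ⟨a, ha⟩
  have : a = idealMul I w := by rw [← coe_idealMulI, hw]
  rw [this, key, LinearMap.mem_ker.mp hz, tmul_zero]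

lemma coker_almost (I : Ideal V) (hI : I * I = I) (M : Type) [AddCommGroup M] [Module V M] :
    ∀ a ∈ I, ∀ y : M ⧸ LinearMap.range (tildeSmulMap I M), a • y = 0 := by
  intro a ha y
  obtain ⟨m, rfl⟩ := Submodule.Quotient.mk_surjective _ y
  rw [← Submodule.Quotient.mk_smul, Submodule.Quotient.mk_eq_zero]
  obtain ⟨w, hw⟩ := idealMulI_surjective I hI ⟨a, ha⟩
  have : a = idealMul I w := by rw [← coe_idealMulI, hw]
  exact ⟨w ⊗ₜ[V] m, by rw [tildeSmulMap_tmul, this]⟩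

lemma smulMap_surj (I : Ideal V) (hI : I * I = I) (M : Type) [AddCommGroup M] [Module V M] :
    Function.Surjective (smulMap I ((↥I ⊗[V] ↥I) ⊗[V] M)) := by
  intro u
  have : u ∈ LinearMap.range (smulMap I ((↥I ⊗[V] ↥I) ⊗[V] M)) := by
    induction u using TensorProduct.induction_on with
    | zero => exact zero_mem _
    | tmul x m =>
      induction x using TensorProduct.induction_on with
      | zero => rw [zero_tmul]; exact zero_mem _
      | tmul a b =>
        obtain ⟨w, hw⟩ := idealMulI_surjective I hI a
        have hcl : ∀ w' : ↥I ⊗[V] ↥I,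
            ((idealMulI I w') ⊗ₜ[V] b) ⊗ₜ[V] m ∈
              LinearMap.range (smulMap I ((↥I ⊗[V] ↥I) ⊗[V] M)) := by
          intro w'
          induction w' using TensorProduct.induction_on with
          | zero => rw [map_zero, zero_tmul, zero_tmul]; exact zero_mem _
          | tmul ε δ =>
            have he : idealMulI I (ε ⊗ₜ[V] δ) = (↑ε : V) • δ := Subtype.ext rfl
            rw [he, ← smul_tmul', ← smul_tmul']
            exact ⟨ε ⊗ₜ[V] ((δ ⊗ₜ[V] b) ⊗ₜ[V] m), rfl⟩
          | add w1 w2 h1 h2 =>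
            rw [map_add, add_tmul, add_tmul]
            exact add_mem h1 h2
        rw [← hw]; exact hcl w
      | add x y hx hy => rw [add_tmul]; exact add_mem hx hy
    | add x y hx hy => exact add_mem hx hy
  exact this

lemma tilde_surj (I : Ideal V) (hI : I * I = I) (M : Type) [AddCommGroup M] [Module V M] :
    Function.Surjective (tildeSmulMap I ((↥I ⊗[V] ↥I) ⊗[V] M)) := by
  intro u
  obtain ⟨x, rfl⟩ := smulMap_surj I hI M u
  have : smulMap I ((↥I ⊗[V] ↥I) ⊗[V] M) x ∈
      LinearMap.range (tildeSmulMap I ((↥I ⊗[V] ↥I) ⊗[V] M)) := by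
    induction x using TensorProduct.induction_on with
    | zero => rw [map_zero]; exact zero_mem _
    | tmul c z =>
      obtain ⟨w, hw⟩ := idealMulI_surjective I hI c
      refine ⟨w ⊗ₜ[V] z, ?_⟩
      rw [tildeSmulMap_tmul, smulMap_tmul, ← coe_idealMulI, hw]
    | add x y hx hy => rw [map_add]; exact add_mem hx hy
  exact this

lemma comp_eq (I : Ideal V) (M : Type) [AddCommGroup M] [Module V M]
    (u : (↥I ⊗[V] ↥I) ⊗[V] M) :
    tildeSmulMap I M u = smulMap I M ((idealMulI I).rTensor M u) := by
  induction u using TensorProduct.induction_on with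
  | zero => simp
  | tmul w z => rw [tildeSmulMap_tmul, LinearMap.rTensor_tmul, smulMap_tmul, coe_idealMulI]
  | add x y hx hy => rw [map_add, map_add, map_add, hx, hy]

lemma flat_inj (I : Ideal V) (hI : I * I = I) (P Q : Type)
    [AddCommGroup P] [AddCommGroup Q] [Module V P] [Module V Q]
    (hflat : Module.Flat V (↥I ⊗[V] ↥I))
    (g : P →ₗ[V] Q) (φ : (↥I ⊗[V] ↥I) ⊗[V] P →ₗ[V] (↥I ⊗[V] ↥I) ⊗[V] Q)
    (hφ : ∀ (t : ↥I ⊗[V] ↥I) (p : P), φ (t ⊗ₜ[V] p) = t ⊗ₜ[V] g p)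
    (halmost : ∀ a ∈ I, ∀ z : P, g z = 0 → a • z = 0) :
    Function.Injective φ := by
  haveI := hflat
  have hphi : φ = g.lTensor (↥I ⊗[V] ↥I) := by
    apply LinearMap.ext; intro u
    induction u using TensorProduct.induction_on with
    | zero => simp
    | tmul t p => rw [hφ, LinearMap.lTensor_tmul]
    | add x y hx hy => rw [map_add, map_add, hx, hy]
  rw [hphi]
  have hker : ∀ u : (↥I ⊗[V] ↥I) ⊗[V] ↥(LinearMap.ker g), u = 0 := by
    intro u
    induction u using TensorProduct.induction_on with
    | zero => rfl
    | tmul x n =>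
      induction x using TensorProduct.induction_on with
      | zero => rw [zero_tmul]
      | tmul a b =>
        obtain ⟨w, hw⟩ := idealMulI_surjective I hI a
        have hcl : ∀ w' : ↥I ⊗[V] ↥I,
            ((idealMulI I w') ⊗ₜ[V] b) ⊗ₜ[V] n
              = (0 : (↥I ⊗[V] ↥I) ⊗[V] ↥(LinearMap.ker g)) := by
          intro w'
          induction w' using TensorProduct.induction_on with
          | zero => rw [map_zero, zero_tmul, zero_tmul]
          | tmul ε δ =>
            have he : idealMulI I (ε ⊗ₜ[V] δ) = (↑ε : V) • δ := Subtype.ext rfl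
            have hn : (↑ε : V) • n = 0 := by
              apply Subtype.ext
              rw [Submodule.coe_smul, ZeroMemClass.coe_zero]
              exact halmost ↑ε ε.2 ↑n n.2
            rw [he, ← smul_tmul', smul_tmul, hn, tmul_zero]
          | add w1 w2 h1 h2 =>
            rw [map_add, add_tmul, add_tmul, h1, h2, add_zero]
        rw [← hw]; exact hcl w
      | add x y hx hy => rw [add_tmul, hx, hy, add_zero]
    | add x y hx hy => rw [hx, hy, add_zero]
  have hexact0 : Function.Exact (LinearMap.ker g).subtype g := by
    intro y
    constructor
    · intro h; exact ⟨⟨y, h⟩, rfl⟩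
    · rintro ⟨⟨z, hz⟩, rfl⟩; exact hz
  have hexact := Module.Flat.lTensor_exact (↥I ⊗[V] ↥I) hexact0
  intro u v huv
  have h0 : g.lTensor (↥I ⊗[V] ↥I) (u - v) = 0 := by rw [map_sub, huv, sub_self]
  obtain ⟨w, hw⟩ := (hexact (u - v)).mp h0
  have : u - v = 0 := by rw [← hw, hker w, map_zero]
  exact sub_eq_zero.mp this

lemma tilde_inj (I : Ideal V) (hI : I * I = I) (hflat : Module.Flat V (↥I ⊗[V] ↥I))
    (M : Type) [AddCommGroup M] [Module V M] :
    Function.Injective (tildeSmulMap I ((↥I ⊗[V] ↥I) ⊗[V] M)) := by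
  exact flat_inj I hI ((↥I ⊗[V] ↥I) ⊗[V] M) M hflat (tildeSmulMap I M)
    (tildeSmulMap I ((↥I ⊗[V] ↥I) ⊗[V] M))
    (fun t p => by rw [tildeSmulMap_tmul, key])
    (fun a ha z hz => ker_almost I hI M a ha z (LinearMap.mem_ker.mpr hz))

/-- for `I` idempotent with `Ĩ` flat, the functor `Ĩ ⊗ (−)` takes
values in firm modules, the counit `Ĩ ⊗ M → M` is an almost isomorphism for
every `M`, and `Ĩ ⊗ (−)` is idempotent up to isomorphism. -/
theorem tilde_tensor_colocalization
    (I : Ideal V) (hI : I * I = I) (hflat : Module.Flat V (↥I ⊗[V] ↥I))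
    (M : Type) [AddCommGroup M] [Module V M] :
    Function.Bijective (smulMap I ((↥I ⊗[V] ↥I) ⊗[V] M)) ∧
    ((∀ a ∈ I, ∀ x ∈ LinearMap.ker (tildeSmulMap I M), a • x = 0) ∧
      (∀ a ∈ I, ∀ y : M ⧸ LinearMap.range (tildeSmulMap I M), a • y = 0)) ∧
    Function.Bijective (tildeSmulMap I ((↥I ⊗[V] ↥I) ⊗[V] M)) := by
  refine ⟨⟨?_, smulMap_surj I hI M⟩,
    ⟨ker_almost I hI M, coker_almost I hI M⟩,
    tilde_inj I hI hflat M, tilde_surj I hI M⟩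
  intro x y hxy
  obtain ⟨x', rfl⟩ := LinearMap.rTensor_surjective ((↥I ⊗[V] ↥I) ⊗[V] M)
    (idealMulI_surjective I hI) x
  obtain ⟨y', rfl⟩ := LinearMap.rTensor_surjective ((↥I ⊗[V] ↥I) ⊗[V] M)
    (idealMulI_surjective I hI) y
  rw [← comp_eq, ← comp_eq] at hxy
  rw [tilde_inj I hI hflat M hxy]


end
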